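/- arXiv:2301.02220 — 3 statements merged into one kernel-verified Lean document; each statement's English description precedes it below -/
import Mathlib

section
/- Performance-difference identity (basis of trust region policy optimization, Equation (4) of the paper): for any two policies π_new and π_old, (1−γ)(V(π_new) − V(π_old)) = Σ_{a∈A, s∈S} π_new(a|s) A^{π_old}(a,s) d^{π_new,ν}(s). -/
/-!
Let `P` be the state-transition matrix of a policy and `G = ∑ γᵗ Pᵗ = (1 - γP)⁻¹` its resolvent
(the series converges because `P` is row stochastic). Then `V^π = G r^π`,
`d^{π,ν} = (1 - γ) ν G`, and the Bellman equation `Q^π(a,s) = r(s,a) + γ p(·|a,s) ⬝ V^π` holds.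
Averaging the advantage of `π_old` over `π_new` turns it into `r^{new} - (1 - γ P_new) V^{old}`;
pairing this with `d^{new,ν} = (1 - γ) ν G_new` and cancelling `G_new (1 - γ P_new) = 1` leaves
`(1 - γ) (ν ⬝ V^{new} - ν ⬝ V^{old})`.
-/

namespace VEPO

variable {S A : Type} [Fintype S] [Fintype A] [DecidableEq S] [DecidableEq A]

/-- A probability mass function on a finite type, represented as a real-valued function. -/
def IsPMF {X : Type} [Fintype X] (f : X → ℝ) : Prop :=
  (∀ x, 0 ≤ f x) ∧ ∑ x : X, f x = 1

/-- A transition kernel: for each action-state pair `(a, s)`, a pmf `p a s` on next states. -/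
def IsKernel (p : A → S → S → ℝ) : Prop := ∀ a s, IsPMF (p a s)

/-- A policy: for each state `s`, a pmf `π s` on actions. -/
def IsPolicy (π : S → A → ℝ) : Prop := ∀ s, IsPMF (π s)

/-- The `t`-step visitation probability `p_t^π(s' | a, s)`. -/
def visit (p : A → S → S → ℝ) (π : S → A → ℝ) : ℕ → A → S → S → ℝ
  | 0, _, s, s' => if s' = s then 1 else 0
  | 1, a, s, s' => p a s s'
  | (t + 2), a, s, s' =>
      ∑ s'' : S, visit p π (t + 1) a s s'' * ∑ a'' : A, π s'' a'' * p a'' s'' s'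

/-- The Q-function `Q^π(a, s)`. -/
noncomputable def Qfun (p : A → S → S → ℝ) (r : S → A → ℝ) (γ : ℝ)
    (π : S → A → ℝ) (a : A) (s : S) : ℝ :=
  r s a + ∑' t : ℕ, γ ^ (t + 1) *
    ∑ s' : S, visit p π (t + 1) a s s' * ∑ a' : A, π s' a' * r s' a'

/-- The value function `V^π(s)`. -/
noncomputable def Vfun (p : A → S → S → ℝ) (r : S → A → ℝ) (γ : ℝ)
    (π : S → A → ℝ) (s : S) : ℝ :=
  ∑ a : A, π s a * Qfun p r γ π a s

/-- The advantage function `A^π(a, s)`. -/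
noncomputable def Adv (p : A → S → S → ℝ) (r : S → A → ℝ) (γ : ℝ)
    (π : S → A → ℝ) (a : A) (s : S) : ℝ :=
  Qfun p r γ π a s - Vfun p r γ π s

/-- The conditional discounted visitation probability `d^π(s' | a, s)`. -/
noncomputable def dvisit (p : A → S → S → ℝ) (γ : ℝ) (π : S → A → ℝ)
    (s' : S) (a : A) (s : S) : ℝ :=
  (1 - γ) * ∑' t : ℕ, γ ^ t * visit p π t a s s'

/-- The integrated discounted visitation probability `d^{π,ν}(s')`. -/
noncomputable def dnu (p : A → S → S → ℝ) (γ : ℝ) (ν : S → ℝ)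
    (π : S → A → ℝ) (s' : S) : ℝ :=
  ∑ s : S, ∑ a : A, π s a * ν s * dvisit p γ π s' a s

/-- The integrated value `V(π) = Σ_s ν(s) V^π(s)`. -/
noncomputable def IntV (p : A → S → S → ℝ) (r : S → A → ℝ) (γ : ℝ) (ν : S → ℝ)
    (π : S → A → ℝ) : ℝ :=
  ∑ s : S, ν s * Vfun p r γ π s

/-- The first-order term `η₁(π₁, π₂)`. -/
noncomputable def eta1 (p : A → S → S → ℝ) (r : S → A → ℝ) (γ : ℝ) (ν : S → ℝ)
    (π₁ π₂ : S → A → ℝ) : ℝ :=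
  ∑ a : A, ∑ s : S, π₁ s a * Adv p r γ π₂ a s * dnu p γ ν π₂ s

/-- The higher-order remainder `η₂(π₁, π₂)`. -/
noncomputable def eta2 (p : A → S → S → ℝ) (r : S → A → ℝ) (γ : ℝ) (ν : S → ℝ)
    (π₁ π₂ : S → A → ℝ) : ℝ :=
  ∑ a : A, ∑ s : S, (π₁ s a - π₂ s a) * Adv p r γ π₂ a s *
    (dnu p γ ν π₁ s - dnu p γ ν π₂ s)

/-- Total variation distance between two pmfs on a finite type. -/
noncomputable def DTV {X : Type} [Fintype X] (μ₁ μ₂ : X → ℝ) : ℝ :=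
  (1 / 2) * ∑ x : X, |μ₁ x - μ₂ x|

/-- Kullback–Leibler divergence between two pmfs on a finite type, valued in `EReal`
(equal to `⊤` if `μ₁` is not absolutely continuous w.r.t. `μ₂`). -/
noncomputable def DKL {X : Type} [Fintype X] (μ₁ μ₂ : X → ℝ) : EReal :=
  ∑ x : X, (if μ₁ x = 0 then (0 : EReal)
    else if μ₂ x = 0 then (⊤ : EReal)
    else ((μ₁ x * Real.log (μ₁ x / μ₂ x) : ℝ) : EReal))

/-- Conditional discounted stationary probability ratio `ω^π(a', s'; a, s)`. -/
noncomputable def ratio (p : A → S → S → ℝ) (γ : ℝ) (pinf : A → S → ℝ)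
    (π : S → A → ℝ) (a' : A) (s' : S) (a : A) (s : S) : ℝ :=
  (1 - γ) * ((if a' = a ∧ s' = s then 1 else 0) +
    ∑' t : ℕ, γ ^ (t + 1) * (π s' a' * visit p π (t + 1) a s s')) / pinf a' s'

/-- Integrated discounted stationary probability ratio `ω^{π,ν}(a', s')`. -/
noncomputable def rationu (p : A → S → S → ℝ) (γ : ℝ) (pinf : A → S → ℝ) (ν : S → ℝ)
    (π : S → A → ℝ) (a' : A) (s' : S) : ℝ :=
  ∑ a : A, ∑ s : S, π s a * ν s * ratio p γ pinf π a' s' a s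

/-- Marginal state distribution `p̄_t^{π,ν}` at time `t` when `S₀ ~ ν` and actions follow `π`. -/
def marg (p : A → S → S → ℝ) (π : S → A → ℝ) (ν : S → ℝ) : ℕ → S → ℝ
  | 0, s' => ν s'
  | (t + 1), s' => ∑ s : S, marg p π ν t s * ∑ a : A, π s a * p a s s'

/-- Conditional discounted state–action visitation `q^π(a', s'; a, s)`. -/
noncomputable def qvisit (p : A → S → S → ℝ) (γ : ℝ) (π : S → A → ℝ)
    (a' : A) (s' : S) (a : A) (s : S) : ℝ :=
  (1 - γ) * ((if a' = a ∧ s' = s then 1 else 0) +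
    ∑' t : ℕ, γ ^ (t + 1) * (π s' a' * visit p π (t + 1) a s s'))

/-- The estimating function `ψ(o) = ψ₁ + ψ₂(o) + ψ₃(o)` evaluated at a data tuple
`o = (s, a, rr, s')`, for nuisance functions `Ṽ = Vt`, `Ã = At`, `ω̃ = ωt`
(with `ωt a' s' a s = ω̃(a',s'; a,s)`) and `d̃ = dt` (with `dt s* a s = d̃(s* | a, s)`). -/
noncomputable def psi (γ : ℝ) (ν : S → ℝ) (π πold : S → A → ℝ)
    (Vt : S → ℝ) (At : A → S → ℝ) (ωt : A → S → A → S → ℝ) (dt : S → A → S → ℝ)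
    (s : S) (a : A) (rr : ℝ) (s' : S) : ℝ :=
  let dtnu : S → ℝ := fun sstar => ∑ a0 : A, ∑ s0 : S, πold s0 a0 * ν s0 * dt sstar a0 s0
  let ωtnu : A → S → ℝ := fun a1 s1 => ∑ a0 : A, ∑ s0 : S, πold s0 a0 * ν s0 * ωt a1 s1 a0 s0
  (∑ sstar : S, dtnu sstar * ∑ astar : A, π sstar astar * At astar sstar)
  + (1 / (1 - γ)) * ∑ sstar : S, dtnu sstar * ∑ astar : A,
      (π sstar astar - πold sstar astar) * ωt a s astar sstar *
        (rr + γ * Vt s' - Vt s - At a s)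
  + (ωtnu a s / (1 - γ)) * ∑ astar : A,
      (γ * ∑ a' : A, πold s' a' * ∑ sstar : S, dt sstar a' s' * π sstar astar * At astar sstar
       - ∑ sstar : S, dt sstar a s * π sstar astar * At astar sstar
       + (1 - γ) * π s astar * At astar s)

/-- The expectation `E[ψ(O)]` of the estimating function, where `(A₀, S₀) ~ p_∞`,
`S₁ | (A₀, S₀) ~ p(· | A₀, S₀)` and `E[R₀ | A₀, S₀] = r(S₀, A₀)`;  since `ψ` is affine
in its reward argument with a coefficient not depending on `s'`, this finite sum is
exactly the expectation of `ψ(O)`. -/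
noncomputable def Epsi (p : A → S → S → ℝ) (r : S → A → ℝ) (γ : ℝ) (ν : S → ℝ)
    (pinf : A → S → ℝ) (π πold : S → A → ℝ)
    (Vt : S → ℝ) (At : A → S → ℝ) (ωt : A → S → A → S → ℝ) (dt : S → A → S → ℝ) : ℝ :=
  ∑ a : A, ∑ s : S, pinf a s * ∑ s' : S, p a s s' *
    psi γ ν π πold Vt At ωt dt s a (r s a) s'

end VEPO

namespace Matrix

theorem summable_pow_smul_of_mem_rowStochastic {n : Type*} [Fintype n] [DecidableEq n]
    {M : Matrix n n ℝ} (hM : M ∈ rowStochastic ℝ n) {γ : ℝ} (hγ0 : 0 ≤ γ) (hγ1 : γ < 1) :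
    Summable fun t : ℕ => (γ • M) ^ t := by
  refine Pi.summable.2 fun i => Pi.summable.2 fun j => ?_
  have hMt := pow_mem hM
  refine Summable.of_nonneg_of_le (fun t => ?_) (fun t => ?_)
    (summable_geometric_of_lt_one hγ0 hγ1)
  · simpa [smul_pow] using mul_nonneg (pow_nonneg hγ0 t) (nonneg_of_mem_rowStochastic (hMt t))
  · simpa [smul_pow] using
      mul_le_of_le_one_right (pow_nonneg hγ0 t) (le_one_of_mem_rowStochastic (hMt t))

end Matrix

open Matrix in
theorem HasSum.matrix_mulVec_apply {ι m n : Type*} [Fintype n] {f : ι → Matrix m n ℝ}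
    {G : Matrix m n ℝ} (h : HasSum f G) (v : n → ℝ) (i : m) :
    HasSum (fun t => (f t *ᵥ v) i) ((G *ᵥ v) i) :=
  hasSum_sum fun j _ => (Pi.hasSum.1 (Pi.hasSum.1 h i) j).mul_right (v j)

namespace VEPO

open Matrix

variable {S A : Type} [Fintype S] [Fintype A]
  {p : A → S → S → ℝ} {r : S → A → ℝ} {γ : ℝ} {π π' : S → A → ℝ}

def transitionMatrix (p : A → S → S → ℝ) (π : S → A → ℝ) : Matrix S S ℝ :=
  of fun s s' => ∑ a, π s a * p a s s'

def policyReward (r : S → A → ℝ) (π : S → A → ℝ) (s : S) : ℝ :=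
  ∑ a, π s a * r s a

theorem sum_policy_mul_kernel_mulVec (v : S → ℝ) (s : S) :
    ∑ a, π s a * (of (p a) *ᵥ v) s = (transitionMatrix p π *ᵥ v) s := by
  simp only [mulVec, dotProduct, transitionMatrix, of_apply, Finset.mul_sum, Finset.sum_mul,
    mul_assoc]
  exact Finset.sum_comm

theorem sum_policy_mul_kernel_mul_apply (X : Matrix S S ℝ) (s s' : S) :
    ∑ a, π s a * (of (p a) * X) s s' = (transitionMatrix p π * X) s s' :=
  sum_policy_mul_kernel_mulVec (fun x => X x s') s

variable [DecidableEq S]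

noncomputable def resolvent (p : A → S → S → ℝ) (γ : ℝ) (π : S → A → ℝ) : Matrix S S ℝ :=
  ∑' t : ℕ, (γ • transitionMatrix p π) ^ t

theorem transitionMatrix_mem_rowStochastic (hp : IsKernel p) (hπ : IsPolicy π) :
    transitionMatrix p π ∈ rowStochastic ℝ S := by
  refine mem_rowStochastic_iff_sum.2 ⟨fun s s' => ?_, fun s => ?_⟩
  · exact Finset.sum_nonneg fun a _ => mul_nonneg ((hπ s).1 a) ((hp a s).1 s')
  · simp only [transitionMatrix, of_apply]
    rw [Finset.sum_comm]
    simp [← Finset.mul_sum, (hp _ s).2, (hπ s).2]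

theorem hasSum_resolvent (hp : IsKernel p) (hπ : IsPolicy π) (hγ0 : 0 ≤ γ) (hγ1 : γ < 1) :
    HasSum (fun t : ℕ => (γ • transitionMatrix p π) ^ t) (resolvent p γ π) :=
  (summable_pow_smul_of_mem_rowStochastic (transitionMatrix_mem_rowStochastic hp hπ) hγ0
    hγ1).hasSum

theorem resolvent_mul_one_sub (hp : IsKernel p) (hπ : IsPolicy π) (hγ0 : 0 ≤ γ) (hγ1 : γ < 1) :
    resolvent p γ π * (1 - γ • transitionMatrix p π) = 1 :=
  (hasSum_resolvent hp hπ hγ0 hγ1).summable.tsum_pow_mul_one_sub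

theorem resolvent_eq_one_add (hp : IsKernel p) (hπ : IsPolicy π) (hγ0 : 0 ≤ γ) (hγ1 : γ < 1) :
    resolvent p γ π = 1 + γ • (transitionMatrix p π * resolvent p γ π) := by
  have h := (hasSum_resolvent hp hπ hγ0 hγ1).summable.one_sub_mul_tsum_pow
  rw [sub_mul, one_mul, sub_eq_iff_eq_add, smul_mul_assoc] at h
  exact h

theorem visit_succ (t : ℕ) (a : A) :
    visit p π (t + 1) a = of (p a) * transitionMatrix p π ^ t := by
  induction t with
  | zero => ext s s'; simp [visit]
  | succ t ih =>
    ext s s'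
    rw [pow_succ, ← mul_assoc, ← ih]
    rfl

theorem Qfun_eq_resolvent (hp : IsKernel p) (hπ : IsPolicy π) (hγ0 : 0 ≤ γ) (hγ1 : γ < 1)
    (a : A) (s : S) :
    Qfun p r γ π a s =
      r s a + γ * (of (p a) *ᵥ (resolvent p γ π *ᵥ policyReward r π)) s := by
  have h := (((hasSum_resolvent hp hπ hγ0 hγ1).mul_left (of (p a))).matrix_mulVec_apply
    (policyReward r π) s).mul_left γ
  rw [mulVec_mulVec, Qfun, ← h.tsum_eq]
  congr 1
  refine tsum_congr fun t => ?_
  rw [visit_succ, smul_pow, mul_smul_comm, smul_mulVec, Pi.smul_apply, smul_eq_mul, pow_succ,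
    mul_comm _ γ, mul_assoc]
  rfl

theorem Vfun_eq_resolvent (hp : IsKernel p) (hπ : IsPolicy π) (hγ0 : 0 ≤ γ) (hγ1 : γ < 1) :
    Vfun p r γ π = resolvent p γ π *ᵥ policyReward r π := by
  ext s
  have h : ∑ a, π s a * Qfun p r γ π a s = policyReward r π s +
      γ * (transitionMatrix p π *ᵥ (resolvent p γ π *ᵥ policyReward r π)) s := by
    simp only [Qfun_eq_resolvent hp hπ hγ0 hγ1, mul_add, Finset.sum_add_distrib,
      mul_left_comm _ γ, ← Finset.mul_sum, sum_policy_mul_kernel_mulVec]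
    rfl
  rw [Vfun, h]
  conv_rhs => rw [resolvent_eq_one_add hp hπ hγ0 hγ1]
  simp [add_mulVec, smul_mulVec, mulVec_mulVec]

theorem Qfun_bellman (hp : IsKernel p) (hπ : IsPolicy π) (hγ0 : 0 ≤ γ) (hγ1 : γ < 1)
    (a : A) (s : S) :
    Qfun p r γ π a s = r s a + γ * (of (p a) *ᵥ Vfun p r γ π) s := by
  rw [Qfun_eq_resolvent hp hπ hγ0 hγ1, Vfun_eq_resolvent hp hπ hγ0 hγ1]

theorem hasSum_visit (hp : IsKernel p) (hπ : IsPolicy π) (hγ0 : 0 ≤ γ) (hγ1 : γ < 1)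
    (a : A) (s s' : S) :
    HasSum (fun t => γ ^ t * visit p π t a s s')
      ((1 + γ • (of (p a) * resolvent p γ π)) s s') := by
  have h := Pi.hasSum.1 (Pi.hasSum.1
    (((hasSum_resolvent hp hπ hγ0 hγ1).mul_left (of (p a))).const_smul γ) s) s'
  have hsucc : ∀ t, γ ^ (t + 1) * visit p π (t + 1) a s s' =
      (γ • (of (p a) * (γ • transitionMatrix p π) ^ t)) s s' := fun t => by
    rw [visit_succ, smul_pow, mul_smul_comm, Matrix.smul_apply, Matrix.smul_apply, smul_eq_mul,
      smul_eq_mul, pow_succ]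
    ring
  have h0 : visit p π 0 a s s' = (1 : Matrix S S ℝ) s s' := by
    simp [visit, one_apply, eq_comm]
  refine (hasSum_nat_add_iff' 1).1 ?_
  rw [Finset.sum_range_one, pow_zero, one_mul, h0, Matrix.add_apply, add_sub_cancel_left]
  simpa only [hsucc] using h

theorem sum_policy_mul_one_add_smul_kernel_mul (hπ : IsPolicy π) (X : Matrix S S ℝ) (s s' : S) :
    ∑ a, π s a * (1 + γ • (of (p a) * X)) s s' = (1 + γ • (transitionMatrix p π * X)) s s' := by
  simp only [Matrix.add_apply, Matrix.smul_apply, smul_eq_mul, mul_add, Finset.sum_add_distrib,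
    ← Finset.sum_mul, (hπ s).2, one_mul, mul_left_comm _ γ, ← Finset.mul_sum,
    sum_policy_mul_kernel_mul_apply]

theorem dnu_eq_resolvent (hp : IsKernel p) (hπ : IsPolicy π) (hγ0 : 0 ≤ γ) (hγ1 : γ < 1)
    (ν : S → ℝ) : dnu p γ ν π = (1 - γ) • (ν ᵥ* resolvent p γ π) := by
  ext s'
  simp only [dnu, dvisit, (hasSum_visit hp hπ hγ0 hγ1 _ _ _).tsum_eq]
  calc ∑ s, ∑ a, π s a * ν s * ((1 - γ) * (1 + γ • (of (p a) * resolvent p γ π)) s s')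
      = (1 - γ) * ∑ s, ν s * ∑ a, π s a * (1 + γ • (of (p a) * resolvent p γ π)) s s' := by
        simp only [Finset.mul_sum]
        refine Finset.sum_congr rfl fun s _ => Finset.sum_congr rfl fun a _ => ?_
        ring
    _ = ((1 - γ) • (ν ᵥ* resolvent p γ π)) s' := by
        simp only [sum_policy_mul_one_add_smul_kernel_mul hπ,
          ← resolvent_eq_one_add hp hπ hγ0 hγ1]
        rfl

theorem sum_policy_mul_Adv (hp : IsKernel p) (hπ : IsPolicy π) (hπ' : IsPolicy π')
    (hγ0 : 0 ≤ γ) (hγ1 : γ < 1) (s : S) :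
    ∑ a, π' s a * Adv p r γ π a s =
      (policyReward r π' - (1 - γ • transitionMatrix p π') *ᵥ Vfun p r γ π : S → ℝ) s := by
  simp only [Adv, mul_sub, Finset.sum_sub_distrib, ← Finset.sum_mul, (hπ' s).2, one_mul,
    Qfun_bellman hp hπ hγ0 hγ1, mul_add, Finset.sum_add_distrib, mul_left_comm _ γ,
    ← Finset.mul_sum, sum_policy_mul_kernel_mulVec]
  simp only [sub_mulVec, one_mulVec, smul_mulVec, Pi.sub_apply, Pi.smul_apply, smul_eq_mul,
    policyReward]
  ring

theorem performance_difference_identity_general {S A : Type} [Fintype S] [Fintype A] [DecidableEq S]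
    (p : A → S → S → ℝ) (r : S → A → ℝ) (γ : ℝ) (ν : S → ℝ)
    (hp : IsKernel p)
    (hγ0 : 0 ≤ γ) (hγ1 : γ < 1)
    (πnew πold : S → A → ℝ) (hnew : IsPolicy πnew) (hold : IsPolicy πold) :
    (1 - γ) * (IntV p r γ ν πnew - IntV p r γ ν πold) =
      ∑ a : A, ∑ s : S, πnew s a * Adv p r γ πold a s * dnu p γ ν πnew s := by
  set Pnew := transitionMatrix p πnew
  set Gnew := resolvent p γ πnew
  calc (1 - γ) * (IntV p r γ ν πnew - IntV p r γ ν πold)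
      = (1 - γ) * (ν ⬝ᵥ (Gnew *ᵥ policyReward r πnew)
          - ν ⬝ᵥ ((Gnew * (1 - γ • Pnew)) *ᵥ Vfun p r γ πold)) := by
        rw [resolvent_mul_one_sub hp hnew hγ0 hγ1, one_mulVec,
          ← Vfun_eq_resolvent hp hnew hγ0 hγ1]
        rfl
    _ = dnu p γ ν πnew ⬝ᵥ (policyReward r πnew - (1 - γ • Pnew) *ᵥ Vfun p r γ πold) := by
        rw [dnu_eq_resolvent hp hnew hγ0 hγ1, smul_dotProduct, dotProduct_sub, ← mulVec_mulVec,
          ← dotProduct_mulVec, ← dotProduct_mulVec, smul_eq_mul]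
    _ = ∑ a : A, ∑ s : S, πnew s a * Adv p r γ πold a s * dnu p γ ν πnew s := by
        rw [Finset.sum_comm]
        refine Finset.sum_congr rfl fun s _ => ?_
        rw [← sum_policy_mul_Adv hp hold hnew hγ0 hγ1, mul_comm, Finset.sum_mul]

theorem performance_difference_identity {S A : Type} [Fintype S] [Fintype A] [DecidableEq S] [DecidableEq A]
    [Nonempty S] [Nonempty A]
    (p : A → S → S → ℝ) (r : S → A → ℝ) (γ : ℝ) (ν : S → ℝ) (Rmax : ℝ)
    (hp : IsKernel p) (hr : ∀ s a, |r s a| ≤ Rmax)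
    (hγ0 : 0 ≤ γ) (hγ1 : γ < 1) (hν : IsPMF ν)
    (πnew πold : S → A → ℝ) (hnew : IsPolicy πnew) (hold : IsPolicy πold) :
    (1 - γ) * (IntV p r γ ν πnew - IntV p r γ ν πold) =
      ∑ a : A, ∑ s : S, πnew s a * Adv p r γ πold a s * dnu p γ ν πnew s :=
  performance_difference_identity_general p r γ ν hp hγ0 hγ1 πnew πold hnew hold

end VEPO
end

section
/- Lemma 1 (total variation bound on the higher-order remainder): suppose there exists C > 0 such that ν(s) ≥ C for all s ∈ S. Then there exists a constant c* > 0, depending only on γ, R_max and C, such that for all policies π_old, π_new: |η₂(π_new, π_old)| ≤ (c* γ/(1−γ)) · [Σ_{s∈S} d^{π_old,ν}(s) D_TV(π_old(·|s), π_new(·|s))]². -/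
/-! Write `d^{π,ν} = (1 - γ) ∑ₜ γᵗ p̄ₜ^{π,ν}` with the state marginals `p̄ₜ = marg`. A Markov step
`μ K - μ' K' = (μ - μ') K + μ' (K - K')` shows `‖p̄ₜ^{new} - p̄ₜ^{old}‖₁ ≤ t M`, where
`M = maxₛ ‖π_new(·|s) - π_old(·|s)‖₁`, hence `‖d^{new,ν} - d^{old,ν}‖₁ ≤ M γ / (1 - γ)`.
With `|A^π| ≤ 2 R_max / (1 - γ)` this gives `|η₂| ≤ 2 R_max γ M² / (1 - γ)²`, and
`d^{old,ν}(s) ≥ (1 - γ) ν(s) ≥ (1 - γ) C` bounds `M` by `2 / ((1 - γ) C)` times the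
`d^{old,ν}`-weighted total variation. -/

namespace VEPO

open Finset

section

variable {X Y : Type} [Fintype X] [Fintype Y]

lemma IsPMF.le_one {μ : X → ℝ} (hμ : IsPMF μ) (x : X) : μ x ≤ 1 :=
  hμ.2 ▸ single_le_sum (fun y _ => hμ.1 y) (mem_univ x)

lemma IsPMF.abs_le_one {μ : X → ℝ} (hμ : IsPMF μ) (x : X) : |μ x| ≤ 1 := by
  rw [abs_of_nonneg (hμ.1 x)]
  exact hμ.le_one x

lemma IsPMF.abs_sum_mul_le {μ f : X → ℝ} {B : ℝ} (hμ : IsPMF μ) (hf : ∀ x, |f x| ≤ B) :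
    |∑ x, μ x * f x| ≤ B :=
  calc |∑ x, μ x * f x| ≤ ∑ x, μ x * B := by
        refine (abs_sum_le_sum_abs _ _).trans (sum_le_sum fun x _ => ?_)
        rw [abs_mul, abs_of_nonneg (hμ.1 x)]
        exact mul_le_mul_of_nonneg_left (hf x) (hμ.1 x)
    _ = B := by rw [← sum_mul, hμ.2, one_mul]

lemma isPMF_indicator [DecidableEq X] (x : X) : IsPMF fun y => if y = x then (1 : ℝ) else 0 :=
  ⟨fun y => by positivity, by simp⟩

lemma IsPMF.bind {μ : X → ℝ} {K : X → Y → ℝ} (hμ : IsPMF μ) (hK : ∀ x, IsPMF (K x)) :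
    IsPMF fun y => ∑ x, μ x * K x y := by
  refine ⟨fun y => sum_nonneg fun x _ => mul_nonneg (hμ.1 x) ((hK x).1 y), ?_⟩
  rw [sum_comm]
  simp only [← mul_sum, (hK _).2, mul_one, hμ.2]

lemma sum_abs_sum_mul_le {K : X → Y → ℝ} (hK : ∀ x, IsPMF (K x)) (f : X → ℝ) :
    ∑ y, |∑ x, f x * K x y| ≤ ∑ x, |f x| :=
  calc ∑ y, |∑ x, f x * K x y| ≤ ∑ y, ∑ x, |f x| * K x y := by
        refine sum_le_sum fun y _ => (abs_sum_le_sum_abs _ _).trans_eq ?_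
        simp only [abs_mul, abs_of_nonneg ((hK _).1 y)]
    _ = ∑ x, |f x| := by
        rw [sum_comm]
        simp only [← mul_sum, (hK _).2, mul_one]

lemma sum_abs_sum_mul_sub_sum_mul_le {μ μ' : X → ℝ} {K K' : X → Y → ℝ}
    (hμ' : ∀ x, 0 ≤ μ' x) (hK : ∀ x, IsPMF (K x)) :
    ∑ y, |∑ x, μ x * K x y - ∑ x, μ' x * K' x y| ≤
      ∑ x, |μ x - μ' x| + ∑ x, μ' x * ∑ y, |K x y - K' x y| := by
  have hsplit : ∀ y, ∑ x, μ x * K x y - ∑ x, μ' x * K' x y =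
      ∑ x, (μ x - μ' x) * K x y + ∑ x, μ' x * (K x y - K' x y) := fun y => by
    simp only [← sum_sub_distrib, ← sum_add_distrib]
    exact sum_congr rfl fun x _ => by ring
  calc ∑ y, |∑ x, μ x * K x y - ∑ x, μ' x * K' x y|
      ≤ ∑ y, (|∑ x, (μ x - μ' x) * K x y| + ∑ x, μ' x * |K x y - K' x y|) := by
        refine sum_le_sum fun y _ => (hsplit y).symm ▸ (abs_add_le _ _).trans ?_
        gcongr
        refine (abs_sum_le_sum_abs _ _).trans_eq ?_
        simp only [abs_mul, abs_of_nonneg (hμ' _)]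
    _ ≤ _ := by
        rw [sum_add_distrib, sum_comm (f := fun y x => μ' x * |K x y - K' x y|)]
        simp only [← mul_sum]
        gcongr
        exact sum_abs_sum_mul_le hK _

lemma summable_pow_mul_of_abs_le_one {γ : ℝ} (hγ0 : 0 ≤ γ) (hγ1 : γ < 1) {f : ℕ → ℝ}
    (hf : ∀ t, |f t| ≤ 1) : Summable fun t => γ ^ t * f t :=
  (summable_geometric_of_lt_one hγ0 hγ1).of_norm_bounded fun t => by
    rw [Real.norm_eq_abs, abs_mul, abs_of_nonneg (pow_nonneg hγ0 t)]
    exact mul_le_of_le_one_right (pow_nonneg hγ0 t) (hf t)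

lemma sum_abs_tsum_pow_mul_le {γ M : ℝ} (hγ0 : 0 ≤ γ) (hγ1 : γ < 1) {f : ℕ → X → ℝ}
    (hf : ∀ t, ∑ x, |f t x| ≤ t * M) :
    ∑ x, |∑' t, γ ^ t * f t x| ≤ M * (γ / (1 - γ) ^ 2) := by
  have hγ : ‖γ‖ < 1 := by rwa [Real.norm_eq_abs, abs_of_nonneg hγ0]
  have hbound : HasSum (fun t : ℕ => γ ^ t * (t * M)) (M * (γ / (1 - γ) ^ 2)) := by
    rw [show (fun t : ℕ => γ ^ t * (t * M)) = fun t : ℕ => M * (t * γ ^ t) from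
      funext fun t => by ring]
    exact (hasSum_coe_mul_geometric_of_norm_lt_one hγ).mul_left M
  have hterm : ∀ x t, ‖γ ^ t * |f t x|‖ ≤ γ ^ t * (t * M) := fun x t => by
    rw [Real.norm_eq_abs, abs_mul, abs_abs, abs_of_nonneg (pow_nonneg hγ0 t)]
    exact mul_le_mul_of_nonneg_left
      ((single_le_sum (fun y _ => abs_nonneg (f t y)) (mem_univ x)).trans (hf t))
      (pow_nonneg hγ0 t)
  have hsumm : ∀ x, Summable fun t => γ ^ t * |f t x| := fun x =>
    hbound.summable.of_norm_bounded (hterm x)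
  calc ∑ x, |∑' t, γ ^ t * f t x| ≤ ∑ x, ∑' t, γ ^ t * |f t x| := by
        refine sum_le_sum fun x _ => ?_
        have habs : ∀ t, ‖γ ^ t * f t x‖ = γ ^ t * |f t x| := fun t => by
          rw [Real.norm_eq_abs, abs_mul, abs_of_nonneg (pow_nonneg hγ0 t)]
        simpa only [Real.norm_eq_abs, habs] using
          norm_tsum_le_tsum_norm (f := fun t => γ ^ t * f t x) (by simpa only [habs] using hsumm x)
    _ = ∑' t, ∑ x, γ ^ t * |f t x| := (Summable.tsum_finsetSum fun x _ => hsumm x).symm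
    _ ≤ ∑' t : ℕ, γ ^ t * (t * M) :=
        Summable.tsum_le_tsum
          (fun t => by rw [← mul_sum]; exact mul_le_mul_of_nonneg_left (hf t) (pow_nonneg hγ0 t))
          (summable_sum fun x _ => hsumm x) hbound.summable
    _ = M * (γ / (1 - γ) ^ 2) := hbound.tsum_eq

end

section MDP

variable {S A : Type} [Fintype S] [Fintype A] {p : A → S → S → ℝ} {π π' : S → A → ℝ}
  {ν : S → ℝ} {γ : ℝ}

def stateKernel (p : A → S → S → ℝ) (π : S → A → ℝ) (s s' : S) : ℝ :=
  ∑ a, π s a * p a s s'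

lemma IsPolicy.isPMF_stateKernel (hπ : IsPolicy π) (hp : IsKernel p) (s : S) :
    IsPMF (stateKernel p π s) :=
  (hπ s).bind fun a => hp a s

lemma sum_abs_stateKernel_sub_le (hp : IsKernel p) (π π' : S → A → ℝ) (s : S) :
    ∑ s', |stateKernel p π s s' - stateKernel p π' s s'| ≤ ∑ a, |π s a - π' s a| := by
  simpa only [stateKernel, ← sum_sub_distrib, ← sub_mul] using
    sum_abs_sum_mul_le (fun a => hp a s) fun a => π s a - π' s a

lemma isPMF_marg (hp : IsKernel p) (hπ : IsPolicy π) (hν : IsPMF ν) :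
    ∀ t, IsPMF (marg p π ν t)
  | 0 => hν
  | t + 1 => (isPMF_marg hp hπ hν t).bind (hπ.isPMF_stateKernel hp)

lemma summable_pow_mul_marg (hp : IsKernel p) (hπ : IsPolicy π) (hν : IsPMF ν) (hγ0 : 0 ≤ γ)
    (hγ1 : γ < 1) (s' : S) : Summable fun t => γ ^ t * marg p π ν t s' :=
  summable_pow_mul_of_abs_le_one hγ0 hγ1 fun t => (isPMF_marg hp hπ hν t).abs_le_one s'

lemma sum_abs_marg_sub_le (hp : IsKernel p) (hπ : IsPolicy π) (hπ' : IsPolicy π')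
    (hν : IsPMF ν) {M : ℝ} (hM : ∀ s, ∑ a, |π s a - π' s a| ≤ M) (t : ℕ) :
    ∑ s', |marg p π ν t s' - marg p π' ν t s'| ≤ t * M := by
  induction t with
  | zero => simp [marg]
  | succ t ih =>
    calc ∑ s', |marg p π ν (t + 1) s' - marg p π' ν (t + 1) s'|
        ≤ ∑ s, |marg p π ν t s - marg p π' ν t s| +
            ∑ s, marg p π' ν t s * ∑ s', |stateKernel p π s s' - stateKernel p π' s s'| :=
          sum_abs_sum_mul_sub_sum_mul_le (isPMF_marg hp hπ' hν t).1 (hπ.isPMF_stateKernel hp)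
      _ ≤ t * M + ∑ s, marg p π' ν t s * M :=
          add_le_add ih <| sum_le_sum fun s _ => mul_le_mul_of_nonneg_left
            ((sum_abs_stateKernel_sub_le hp π π' s).trans (hM s)) ((isPMF_marg hp hπ' hν t).1 s)
      _ = (t + 1 : ℕ) * M := by
          rw [← sum_mul, (isPMF_marg hp hπ' hν t).2]
          push_cast
          ring

variable [DecidableEq S]

lemma isPMF_visit (hp : IsKernel p) (hπ : IsPolicy π) : ∀ t a s, IsPMF (visit p π t a s)
  | 0, _, s => isPMF_indicator s
  | 1, a, s => hp a s
  | t + 2, a, s => (isPMF_visit hp hπ (t + 1) a s).bind (hπ.isPMF_stateKernel hp)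

lemma sum_visit_eq_marg (hπ : IsPolicy π) (ν : S → ℝ) :
    ∀ t s', ∑ s, ∑ a, π s a * ν s * visit p π t a s s' = marg p π ν t s'
  | 0, s' => by
    simp [visit, marg, ← sum_mul, (hπ s').2]
  | 1, s' => by
    simp only [visit, marg, mul_sum]
    exact sum_congr rfl fun s _ => sum_congr rfl fun a _ => by ring
  | t + 2, s' => by
    change ∑ s, ∑ a, π s a * ν s * ∑ s'', visit p π (t + 1) a s s'' * stateKernel p π s'' s' =
      ∑ s'', marg p π ν (t + 1) s'' * stateKernel p π s'' s'
    simp only [← sum_visit_eq_marg hπ ν (t + 1), mul_sum, sum_mul]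
    refine (sum_congr rfl fun s _ => sum_comm).trans (sum_comm.trans ?_)
    exact sum_congr rfl fun _ _ => sum_congr rfl fun _ _ => sum_congr rfl fun _ _ => by ring

lemma dnu_eq_tsum_marg (hp : IsKernel p) (hπ : IsPolicy π) (hγ0 : 0 ≤ γ) (hγ1 : γ < 1)
    (s' : S) : dnu p γ ν π s' = (1 - γ) * ∑' t, γ ^ t * marg p π ν t s' := by
  have hsum := hasSum_sum fun s (_ : s ∈ univ) => hasSum_sum fun a (_ : a ∈ univ) =>
    (summable_pow_mul_of_abs_le_one hγ0 hγ1 fun t => (isPMF_visit hp hπ t a s).abs_le_one s'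
      ).hasSum.mul_left ((1 - γ) * (π s a * ν s))
  have hdnu : dnu p γ ν π s' =
      ∑ s, ∑ a, (1 - γ) * (π s a * ν s) * ∑' t, γ ^ t * visit p π t a s s' := by
    simp only [dnu, dvisit]
    exact sum_congr rfl fun s _ => sum_congr rfl fun a _ => by ring
  rw [hdnu, ← hsum.tsum_eq, ← tsum_mul_left]
  refine tsum_congr fun t => ?_
  rw [← sum_visit_eq_marg hπ ν t s']
  simp only [mul_sum]
  exact sum_congr rfl fun s _ => sum_congr rfl fun a _ => by ring

lemma dnu_nonneg (hp : IsKernel p) (hπ : IsPolicy π) (hν : IsPMF ν) (hγ0 : 0 ≤ γ)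
    (hγ1 : γ < 1) (s' : S) : 0 ≤ dnu p γ ν π s' := by
  rw [dnu_eq_tsum_marg hp hπ hγ0 hγ1]
  exact mul_nonneg (sub_nonneg.2 hγ1.le)
    (tsum_nonneg fun t => mul_nonneg (pow_nonneg hγ0 t) ((isPMF_marg hp hπ hν t).1 s'))

lemma mul_le_dnu (hp : IsKernel p) (hπ : IsPolicy π) (hν : IsPMF ν) (hγ0 : 0 ≤ γ)
    (hγ1 : γ < 1) (s' : S) : (1 - γ) * ν s' ≤ dnu p γ ν π s' := by
  rw [dnu_eq_tsum_marg hp hπ hγ0 hγ1]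
  refine mul_le_mul_of_nonneg_left ?_ (sub_nonneg.2 hγ1.le)
  simpa [marg] using (summable_pow_mul_marg hp hπ hν hγ0 hγ1 s').le_tsum 0
    fun t _ => mul_nonneg (pow_nonneg hγ0 t) ((isPMF_marg hp hπ hν t).1 s')

lemma sum_abs_dnu_sub_le (hp : IsKernel p) (hπ : IsPolicy π) (hπ' : IsPolicy π')
    (hν : IsPMF ν) (hγ0 : 0 ≤ γ) (hγ1 : γ < 1) {M : ℝ} (hM : ∀ s, ∑ a, |π s a - π' s a| ≤ M) :
    ∑ s, |dnu p γ ν π s - dnu p γ ν π' s| ≤ M * (γ / (1 - γ)) := by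
  have hγ : 0 < 1 - γ := sub_pos.2 hγ1
  have hdiff : ∀ s, dnu p γ ν π s - dnu p γ ν π' s =
      (1 - γ) * ∑' t, γ ^ t * (marg p π ν t s - marg p π' ν t s) := fun s => by
    rw [dnu_eq_tsum_marg hp hπ hγ0 hγ1, dnu_eq_tsum_marg hp hπ' hγ0 hγ1, ← mul_sub,
      ← (summable_pow_mul_marg hp hπ hν hγ0 hγ1 s).tsum_sub
        (summable_pow_mul_marg hp hπ' hν hγ0 hγ1 s)]
    simp only [mul_sub]
  calc ∑ s, |dnu p γ ν π s - dnu p γ ν π' s|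
      = (1 - γ) * ∑ s, |∑' t, γ ^ t * (marg p π ν t s - marg p π' ν t s)| := by
        simp only [hdiff, abs_mul, abs_of_pos hγ, mul_sum]
    _ ≤ (1 - γ) * (M * (γ / (1 - γ) ^ 2)) :=
        mul_le_mul_of_nonneg_left
          (sum_abs_tsum_pow_mul_le hγ0 hγ1 (sum_abs_marg_sub_le hp hπ hπ' hν hM)) hγ.le
    _ = M * (γ / (1 - γ)) := by
        field_simp

lemma abs_Qfun_le (hp : IsKernel p) (hπ : IsPolicy π) (hγ0 : 0 ≤ γ) (hγ1 : γ < 1)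
    {r : S → A → ℝ} {Rmax : ℝ} (hr : ∀ s a, |r s a| ≤ Rmax) (a : A) (s : S) :
    |Qfun p r γ π a s| ≤ Rmax / (1 - γ) := by
  have hreward : ∀ t, |∑ s', visit p π (t + 1) a s s' * ∑ a', π s' a' * r s' a'| ≤ Rmax :=
    fun t => (isPMF_visit hp hπ (t + 1) a s).abs_sum_mul_le fun s' =>
      (hπ s').abs_sum_mul_le fun a' => hr s' a'
  have htail : |∑' t : ℕ, γ ^ (t + 1) *
      ∑ s', visit p π (t + 1) a s s' * ∑ a', π s' a' * r s' a'| ≤ γ * Rmax * (1 - γ)⁻¹ := by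
    rw [← Real.norm_eq_abs]
    refine tsum_of_norm_bounded ((hasSum_geometric_of_lt_one hγ0 hγ1).mul_left (γ * Rmax))
      fun t => ?_
    rw [Real.norm_eq_abs, abs_mul, abs_of_nonneg (pow_nonneg hγ0 _), pow_succ']
    calc γ * γ ^ t * |∑ s', visit p π (t + 1) a s s' * ∑ a', π s' a' * r s' a'|
        ≤ γ * γ ^ t * Rmax := mul_le_mul_of_nonneg_left (hreward t) (by positivity)
      _ = γ * Rmax * γ ^ t := by ring
  calc |Qfun p r γ π a s| ≤ Rmax + γ * Rmax * (1 - γ)⁻¹ :=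
        (abs_add_le _ _).trans (add_le_add (hr s a) htail)
    _ = Rmax / (1 - γ) := by
        field_simp [(sub_pos.2 hγ1).ne']
        ring

lemma abs_Adv_le (hp : IsKernel p) (hπ : IsPolicy π) (hγ0 : 0 ≤ γ) (hγ1 : γ < 1)
    {r : S → A → ℝ} {Rmax : ℝ} (hr : ∀ s a, |r s a| ≤ Rmax) (a : A) (s : S) :
    |Adv p r γ π a s| ≤ 2 * Rmax / (1 - γ) := by
  have hQ := abs_Qfun_le hp hπ hγ0 hγ1 hr
  have hV : |Vfun p r γ π s| ≤ Rmax / (1 - γ) := (hπ s).abs_sum_mul_le fun a => hQ a s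
  rw [two_mul, add_div]
  exact (abs_sub _ _).trans (add_le_add (hQ a s) hV)

lemma abs_eta2_le [Nonempty S] (hp : IsKernel p) (hπ : IsPolicy π) (hπ' : IsPolicy π')
    (hν : IsPMF ν) (hγ0 : 0 ≤ γ) (hγ1 : γ < 1) {r : S → A → ℝ} {Rmax : ℝ} (hR : 0 ≤ Rmax)
    (hr : ∀ s a, |r s a| ≤ Rmax) {M : ℝ} (hM : ∀ s, ∑ a, |π s a - π' s a| ≤ M) :
    |eta2 p r γ ν π π'| ≤ 2 * Rmax / (1 - γ) * M * (M * (γ / (1 - γ))) := by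
  set B := 2 * Rmax / (1 - γ)
  have hB : 0 ≤ B := div_nonneg (by positivity) (sub_nonneg.2 hγ1.le)
  have hM0 : 0 ≤ M := (sum_nonneg fun a _ => abs_nonneg _).trans (hM (Classical.arbitrary S))
  calc |eta2 p r γ ν π π'|
      ≤ ∑ a, ∑ s, |π s a - π' s a| * |Adv p r γ π' a s| *
          |dnu p γ ν π s - dnu p γ ν π' s| := by
        refine (abs_sum_le_sum_abs _ _).trans (sum_le_sum fun a _ => ?_)
        refine (abs_sum_le_sum_abs _ _).trans_eq (sum_congr rfl fun s _ => ?_)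
        rw [abs_mul, abs_mul]
    _ ≤ ∑ a, ∑ s, |π s a - π' s a| * B * |dnu p γ ν π s - dnu p γ ν π' s| := by
        gcongr with a _ s _
        exact abs_Adv_le hp hπ' hγ0 hγ1 hr a s
    _ = B * ∑ s, (∑ a, |π s a - π' s a|) * |dnu p γ ν π s - dnu p γ ν π' s| := by
        rw [sum_comm, mul_sum]
        refine sum_congr rfl fun s _ => ?_
        rw [sum_mul, mul_sum]
        exact sum_congr rfl fun a _ => by ring
    _ ≤ B * ∑ s, M * |dnu p γ ν π s - dnu p γ ν π' s| := by
        gcongr with s _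
        exact hM s
    _ ≤ B * M * (M * (γ / (1 - γ))) := by
        rw [← mul_sum, ← mul_assoc]
        exact mul_le_mul_of_nonneg_left (sum_abs_dnu_sub_le hp hπ hπ' hν hγ0 hγ1 hM)
          (mul_nonneg hB hM0)

lemma sum_abs_sub_le_of_le_nu (hp : IsKernel p) (hπ' : IsPolicy π') (hν : IsPMF ν)
    (hγ0 : 0 ≤ γ) (hγ1 : γ < 1) {C : ℝ} (hC : 0 < C) (hνC : ∀ s, C ≤ ν s) (s : S) :
    ∑ a, |π s a - π' s a| ≤
      2 * (∑ s, dnu p γ ν π' s * DTV (π' s) (π s)) / ((1 - γ) * C) := by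
  have hDTV : ∀ s, 0 ≤ DTV (π' s) (π s) := fun s => by unfold DTV; positivity
  have hweight : (1 - γ) * C ≤ dnu p γ ν π' s :=
    (mul_le_mul_of_nonneg_left (hνC s) (sub_nonneg.2 hγ1.le)).trans
      (mul_le_dnu hp hπ' hν hγ0 hγ1 s)
  have hsingle : dnu p γ ν π' s * DTV (π' s) (π s) ≤ ∑ s, dnu p γ ν π' s * DTV (π' s) (π s) :=
    single_le_sum (f := fun s => dnu p γ ν π' s * DTV (π' s) (π s))
      (fun s _ => mul_nonneg (dnu_nonneg hp hπ' hν hγ0 hγ1 s) (hDTV s)) (mem_univ s)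
  have hsum : ∑ a, |π s a - π' s a| = 2 * DTV (π' s) (π s) := by
    simp only [DTV, abs_sub_comm (π s _)]
    ring
  rw [hsum, le_div_iff₀ (mul_pos (sub_pos.2 hγ1) hC)]
  nlinarith [mul_le_mul_of_nonneg_right hweight (hDTV s)]

end MDP

theorem remainder_tv_bound (γ Rmax C : ℝ)
    (hγ0 : 0 ≤ γ) (hγ1 : γ < 1) (hR : 0 ≤ Rmax) (hC : 0 < C) :
    ∃ cstar : ℝ, 0 < cstar ∧
      ∀ (S A : Type) [Fintype S] [Fintype A] [DecidableEq S] [DecidableEq A]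
        [Nonempty S] [Nonempty A],
      ∀ (p : A → S → S → ℝ) (r : S → A → ℝ) (ν : S → ℝ),
        IsKernel p → (∀ s a, |r s a| ≤ Rmax) → IsPMF ν → (∀ s, C ≤ ν s) →
      ∀ (πold πnew : S → A → ℝ), IsPolicy πold → IsPolicy πnew →
        |eta2 p r γ ν πnew πold| ≤
          cstar * γ / (1 - γ) *
            (∑ s : S, dnu p γ ν πold s * DTV (πold s) (πnew s)) ^ 2 := by
  have hγ : 0 < 1 - γ := sub_pos.2 hγ1
  refine ⟨8 * (Rmax + 1) / ((1 - γ) ^ 3 * C ^ 2), by positivity, ?_⟩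
  intro S A _ _ _ _ _ _ p r ν hp hr hν hνC πold πnew hπold hπnew
  set T := ∑ s, dnu p γ ν πold s * DTV (πold s) (πnew s)
  calc |eta2 p r γ ν πnew πold|
      ≤ 2 * Rmax / (1 - γ) * (2 * T / ((1 - γ) * C)) *
          (2 * T / ((1 - γ) * C) * (γ / (1 - γ))) :=
        abs_eta2_le hp hπnew hπold hν hγ0 hγ1 hR hr
          (sum_abs_sub_le_of_le_nu hp hπold hν hγ0 hγ1 hC hνC)
    _ = 8 * Rmax / ((1 - γ) ^ 3 * C ^ 2) * (γ / (1 - γ) * T ^ 2) := by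
        field_simp
        ring
    _ ≤ 8 * (Rmax + 1) / ((1 - γ) ^ 3 * C ^ 2) * (γ / (1 - γ) * T ^ 2) := by
        gcongr
        linarith
    _ = 8 * (Rmax + 1) / ((1 - γ) ^ 3 * C ^ 2) * γ / (1 - γ) * T ^ 2 := by ring

end VEPO
end

section
/- Proposition 1, case (B1): suppose in the estimating-function setup that Ã = A^{π_old}, Ṽ = V^{π_old} and d̃(·|a,s) = d^{π_old}(·|a,s) for all (a,s), while ω̃ : (A × S) × (A × S) → ℝ is an arbitrary function. Then E[ψ(O)] = η₁(π, π_old). -/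
/-!
Condition on `(A₀, S₀) = (a, s)` and average `ψ` over `S₁ ~ p(·|a,s)`. With `Ṽ = V^{π_old}`
and `Ã = A^{π_old}` the temporal-difference factor of `ψ₂` has conditional mean
`r(s,a) + γ Σ_{s₁} p(s₁|a,s) V(s₁) - Q(a,s) = 0` by the Bellman equation, and with
`d̃ = d^{π_old}` the bracket of `ψ₃` has conditional mean zero by the flow equation
`d(·|a,s) = (1-γ) δ_s + γ Σ_{s₁} p(s₁|a,s) Σ_{a₁} π_old(a₁|s₁) d(·|a₁,s₁)`. Since the
`ω̃`-weights do not depend on `S₁`, both terms vanish whatever `ω̃` is, and `E[ψ(O)]` reduces to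
the constant `ψ₁`, which is `η₁(π, π_old)` after regrouping. Both the Bellman and the flow
equation are instances of one identity for discounted sums `Σ_t γ^t E[f(S_t)]`, obtained by
peeling off the first transition.
-/

namespace VEPO

variable {S A : Type} [Fintype S] [Fintype A]

section Visit

variable [DecidableEq S] {p : A → S → S → ℝ} {π : S → A → ℝ}

lemma sum_policy_mul_visit_succ (hπ : ∀ s, ∑ a, π s a = 1) (t : ℕ) (s s' : S) :
    ∑ a, π s a * visit p π (t + 1) a s s' =
      ∑ s'', (∑ a, π s a * visit p π t a s s'') * ∑ a'', π s'' a'' * p a'' s'' s' := by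
  cases t with
  | zero => simp [visit, ite_mul, hπ]
  | succ t =>
    simp only [visit, Finset.mul_sum, Finset.sum_mul, mul_assoc]
    rw [Finset.sum_comm]
    exact Finset.sum_congr rfl fun _ _ => Finset.sum_comm

/-- `visit` is defined by extending paths at their end; this extends them at their start. -/
lemma visit_succ_s5 (hπ : ∀ s, ∑ a, π s a = 1) (t : ℕ) (a : A) (s s' : S) :
    visit p π (t + 1) a s s' = ∑ s₁, p a s s₁ * ∑ a₁, π s₁ a₁ * visit p π t a₁ s₁ s' := by
  induction t generalizing s' with
  | zero => simp [visit, hπ]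
  | succ t ih =>
    calc visit p π (t + 2) a s s'
        = ∑ s₂, (∑ s₁, p a s s₁ * ∑ a₁, π s₁ a₁ * visit p π t a₁ s₁ s₂) *
            ∑ a₂, π s₂ a₂ * p a₂ s₂ s' := by simp only [visit, ih]
      _ = ∑ s₁, p a s s₁ * ∑ s₂, (∑ a₁, π s₁ a₁ * visit p π t a₁ s₁ s₂) *
            ∑ a₂, π s₂ a₂ * p a₂ s₂ s' := by
        simp_rw [Finset.sum_mul (s := (Finset.univ : Finset S)),
          Finset.mul_sum (s := (Finset.univ : Finset S)), mul_assoc]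
        exact Finset.sum_comm
      _ = _ := by simp only [sum_policy_mul_visit_succ hπ]

lemma sum_visit_succ_mul (hπ : ∀ s, ∑ a, π s a = 1) (t : ℕ) (a : A) (s : S) (f : S → ℝ) :
    ∑ s', visit p π (t + 1) a s s' * f s' =
      ∑ s₁, p a s s₁ * ∑ a₁, π s₁ a₁ * ∑ s', visit p π t a₁ s₁ s' * f s' := by
  simp only [visit_succ_s5 hπ, Finset.sum_mul, Finset.mul_sum, mul_assoc]
  rw [Finset.sum_comm]
  exact Finset.sum_congr rfl fun _ _ => Finset.sum_comm

lemma visit_nonneg (hp : IsKernel p) (hπ : IsPolicy π) (t : ℕ) (a : A) (s s' : S) :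
    0 ≤ visit p π t a s s' := by
  induction t generalizing a s with
  | zero => unfold visit; positivity
  | succ t ih =>
    rw [visit_succ_s5 fun s => (hπ s).2]
    exact Finset.sum_nonneg fun s₁ _ => mul_nonneg ((hp a s).1 s₁) <|
      Finset.sum_nonneg fun a₁ _ => mul_nonneg ((hπ s₁).1 a₁) (ih a₁ s₁)

lemma sum_visit_eq_one (hp : IsKernel p) (hπ : IsPolicy π) (t : ℕ) (a : A) (s : S) :
    ∑ s', visit p π t a s s' = 1 := by
  induction t generalizing a s with
  | zero => simp [visit]
  | succ t ih =>
    simpa [ih, (hπ _).2, (hp a s).2] using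
      sum_visit_succ_mul (p := p) (fun s => (hπ s).2) t a s (fun _ => 1)

lemma abs_sum_visit_mul_le (hp : IsKernel p) (hπ : IsPolicy π) (t : ℕ) (a : A) (s : S)
    (f : S → ℝ) : |∑ s', visit p π t a s s' * f s'| ≤ ∑ s', |f s'| := by
  refine (Finset.abs_sum_le_sum_abs _ _).trans (Finset.sum_le_sum fun s' _ => ?_)
  have h0 := visit_nonneg hp hπ t a s s'
  have h1 : visit p π t a s s' ≤ 1 :=
    sum_visit_eq_one hp hπ t a s ▸ Finset.single_le_sum (fun s'' _ => visit_nonneg hp hπ t a s s'')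
      (Finset.mem_univ s')
  rw [abs_mul, abs_of_nonneg h0]
  exact mul_le_of_le_one_left (abs_nonneg _) h1

end Visit

/-- Expected discounted sum `E[Σ_t γ^t f(S_t) | A₀ = a, S₀ = s]` of a state function along the
chain driven by `π`. -/
noncomputable def discountedSum [DecidableEq S] (p : A → S → S → ℝ) (π : S → A → ℝ) (γ : ℝ)
    (f : S → ℝ) (a : A) (s : S) : ℝ :=
  ∑' t : ℕ, γ ^ t * ∑ s', visit p π t a s s' * f s'

section DiscountedSum

variable [DecidableEq S] {p : A → S → S → ℝ} {π : S → A → ℝ} {γ : ℝ}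

lemma summable_discounted_visit (hp : IsKernel p) (hπ : IsPolicy π) (hγ0 : 0 ≤ γ) (hγ1 : γ < 1)
    (f : S → ℝ) (a : A) (s : S) :
    Summable fun t : ℕ => γ ^ t * ∑ s', visit p π t a s s' * f s' := by
  refine Summable.of_norm_bounded ((summable_geometric_of_lt_one hγ0 hγ1).mul_right
    (∑ s', |f s'|)) fun t => ?_
  rw [Real.norm_eq_abs, abs_mul, abs_of_nonneg (pow_nonneg hγ0 t)]
  exact mul_le_mul_of_nonneg_left (abs_sum_visit_mul_le hp hπ t a s f) (pow_nonneg hγ0 t)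

/-- Condition on the first transition. -/
lemma discountedSum_eq (hp : IsKernel p) (hπ : IsPolicy π) (hγ0 : 0 ≤ γ) (hγ1 : γ < 1)
    (f : S → ℝ) (a : A) (s : S) :
    discountedSum p π γ f a s =
      f s + γ * ∑ s₁, p a s s₁ * ∑ a₁, π s₁ a₁ * discountedSum p π γ f a₁ s₁ := by
  have hsum : ∀ a s, HasSum (fun t => γ ^ t * ∑ s', visit p π t a s s' * f s')
      (discountedSum p π γ f a s) := fun a s =>
    (summable_discounted_visit hp hπ hγ0 hγ1 f a s).hasSum
  have hshift : HasSum (fun t => γ ^ (t + 1) * ∑ s', visit p π (t + 1) a s s' * f s')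
      (γ * ∑ s₁, p a s s₁ * ∑ a₁, π s₁ a₁ * discountedSum p π γ f a₁ s₁) := by
    refine ((hasSum_sum fun s₁ _ => (hasSum_sum fun a₁ _ =>
      (hsum a₁ s₁).mul_left (π s₁ a₁)).mul_left (p a s s₁)).mul_left γ).congr_fun fun t => ?_
    simp only [sum_visit_succ_mul fun s => (hπ s).2, Finset.mul_sum]
    ring_nf
  rw [discountedSum, (hsum a s).summable.tsum_eq_zero_add, hshift.tsum_eq]
  simp [visit]

lemma dvisit_eq_discountedSum (s' : S) (a : A) (s : S) :
    dvisit p γ π s' a s =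
      (1 - γ) * discountedSum p π γ (fun s'' => if s'' = s' then 1 else 0) a s := by
  simp [dvisit, discountedSum]

lemma dvisit_flow (hp : IsKernel p) (hπ : IsPolicy π) (hγ0 : 0 ≤ γ) (hγ1 : γ < 1)
    (s' : S) (a : A) (s : S) :
    dvisit p γ π s' a s = (1 - γ) * (if s = s' then 1 else 0) +
      γ * ∑ s₁, p a s s₁ * ∑ a₁, π s₁ a₁ * dvisit p γ π s' a₁ s₁ := by
  simp only [dvisit_eq_discountedSum]
  rw [discountedSum_eq hp hπ hγ0 hγ1, mul_add, mul_left_comm (1 - γ) γ]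
  simp only [Finset.mul_sum, mul_left_comm (1 - γ)]

variable {r : S → A → ℝ}

lemma Qfun_eq_discountedSum (hp : IsKernel p) (hπ : IsPolicy π) (hγ0 : 0 ≤ γ) (hγ1 : γ < 1)
    (a : A) (s : S) :
    Qfun p r γ π a s = r s a - ∑ a', π s a' * r s a' +
      discountedSum p π γ (fun s' => ∑ a', π s' a' * r s' a') a s := by
  rw [discountedSum, (summable_discounted_visit hp hπ hγ0 hγ1 _ a s).tsum_eq_zero_add, Qfun]
  simp only [pow_zero, visit, ite_mul, one_mul, zero_mul, Finset.sum_ite_eq', Finset.mem_univ,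
    ↓reduceIte]
  ring

lemma Vfun_eq_discountedSum (hp : IsKernel p) (hπ : IsPolicy π) (hγ0 : 0 ≤ γ) (hγ1 : γ < 1)
    (s : S) :
    Vfun p r γ π s = ∑ a, π s a * discountedSum p π γ (fun s' => ∑ a', π s' a' * r s' a') a s := by
  simp only [Vfun, Qfun_eq_discountedSum hp hπ hγ0 hγ1, mul_add, Finset.sum_add_distrib,
    mul_sub, Finset.sum_sub_distrib, ← Finset.sum_mul, (hπ s).2]
  ring

lemma bellman (hp : IsKernel p) (hπ : IsPolicy π) (hγ0 : 0 ≤ γ) (hγ1 : γ < 1) (a : A) (s : S) :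
    Qfun p r γ π a s = r s a + γ * ∑ s', p a s s' * Vfun p r γ π s' := by
  rw [Qfun_eq_discountedSum hp hπ hγ0 hγ1, discountedSum_eq hp hπ hγ0 hγ1]
  simp only [Vfun_eq_discountedSum hp hπ hγ0 hγ1]
  ring

lemma sum_kernel_mul_td_error_eq_zero (hp : IsKernel p) (hπ : IsPolicy π) (hγ0 : 0 ≤ γ)
    (hγ1 : γ < 1) (a : A) (s : S) :
    ∑ s', p a s s' * (r s a + γ * Vfun p r γ π s' - Vfun p r γ π s - Adv p r γ π a s) = 0 := by
  calc ∑ s', p a s s' * (r s a + γ * Vfun p r γ π s' - Vfun p r γ π s - Adv p r γ π a s)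
      = (∑ s', p a s s') * (r s a - Qfun p r γ π a s) + γ * ∑ s', p a s s' * Vfun p r γ π s' := by
        rw [Finset.sum_mul, Finset.mul_sum, ← Finset.sum_add_distrib]
        exact Finset.sum_congr rfl fun _ _ => by rw [Adv]; ring
    _ = 0 := by rw [(hp a s).2, bellman hp hπ hγ0 hγ1]; ring

end DiscountedSum

section EstimatingFunction

variable [DecidableEq S] {p : A → S → S → ℝ} {γ : ℝ} {πold : S → A → ℝ} {dt : S → A → S → ℝ}

lemma sum_kernel_mul_flow_term
    (hflow : ∀ s' a s, dt s' a s = (1 - γ) * (if s = s' then 1 else 0) +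
      γ * ∑ s₁, p a s s₁ * ∑ a₁, πold s₁ a₁ * dt s' a₁ s₁)
    (g : S → ℝ) (a : A) (s : S) :
    ∑ s₁, p a s s₁ * (γ * ∑ a₁, πold s₁ a₁ * ∑ s', dt s' a₁ s₁ * g s') =
      ∑ s', dt s' a s * g s' - (1 - γ) * g s := by
  calc ∑ s₁, p a s s₁ * (γ * ∑ a₁, πold s₁ a₁ * ∑ s', dt s' a₁ s₁ * g s')
      = ∑ s', (γ * ∑ s₁, p a s s₁ * ∑ a₁, πold s₁ a₁ * dt s' a₁ s₁) * g s' := by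
        simp only [Finset.mul_sum, Finset.sum_mul, mul_assoc, mul_left_comm _ γ]
        exact (Finset.sum_congr rfl fun _ _ => Finset.sum_comm).trans Finset.sum_comm
    _ = ∑ s', (dt s' a s - (1 - γ) * (if s = s' then 1 else 0)) * g s' := by
        simp only [hflow _ a s, add_sub_cancel_left]
    _ = ∑ s', dt s' a s * g s' - (1 - γ) * g s := by
        simp [sub_mul, Finset.sum_sub_distrib]

lemma sum_kernel_mul_psi {r : S → A → ℝ} {ν : S → ℝ} {π : S → A → ℝ} {Vt : S → ℝ}
    {At : A → S → ℝ} (ωt : A → S → A → S → ℝ) (hp : ∀ a s, ∑ s', p a s s' = 1)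
    (htd : ∀ a s, ∑ s', p a s s' * (r s a + γ * Vt s' - Vt s - At a s) = 0)
    (hflow : ∀ s' a s, dt s' a s = (1 - γ) * (if s = s' then 1 else 0) +
      γ * ∑ s₁, p a s s₁ * ∑ a₁, πold s₁ a₁ * dt s' a₁ s₁)
    (a : A) (s : S) :
    ∑ s', p a s s' * psi γ ν π πold Vt At ωt dt s a (r s a) s' =
      ∑ s', (∑ a₀, ∑ s₀, πold s₀ a₀ * ν s₀ * dt s' a₀ s₀) * ∑ a', π s' a' * At a' s' := by
  set ψ₁ := ∑ s', (∑ a₀, ∑ s₀, πold s₀ a₀ * ν s₀ * dt s' a₀ s₀) * ∑ a', π s' a' * At a' s'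
  set K₁ := 1 / (1 - γ) * ∑ s₁, (∑ a₀, ∑ s₀, πold s₀ a₀ * ν s₀ * dt s₁ a₀ s₀) *
    ∑ a', (π s₁ a' - πold s₁ a') * ωt a s a' s₁
  set K₂ := (∑ a₀, ∑ s₀, πold s₀ a₀ * ν s₀ * ωt a s a₀ s₀) / (1 - γ)
  set td := fun s' => r s a + γ * Vt s' - Vt s - At a s
  set B := fun s' => ∑ a', (γ * ∑ a₁, πold s' a₁ * ∑ s₁, dt s₁ a₁ s' * π s₁ a' * At a' s₁
       - ∑ s₁, dt s₁ a s * π s₁ a' * At a' s₁ + (1 - γ) * π s a' * At a' s)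
  have hpsi s' : psi γ ν π πold Vt At ωt dt s a (r s a) s' = ψ₁ + K₁ * td s' + K₂ * B s' := by
    simp only [psi, ψ₁, K₁, K₂, td, B, Finset.sum_mul, mul_assoc]
  have hB : ∑ s', p a s s' * B s' = 0 := by
    simp only [B]
    rw [Finset.sum_congr rfl fun s' _ => Finset.mul_sum Finset.univ _ (p a s s'), Finset.sum_comm]
    refine Finset.sum_eq_zero fun a' _ => ?_
    have h := sum_kernel_mul_flow_term hflow (fun s₁ => π s₁ a' * At a' s₁) a s
    beta_reduce at h
    simp only [mul_assoc, mul_add, mul_sub, Finset.sum_add_distrib, Finset.sum_sub_distrib,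
      ← Finset.sum_mul, h, hp, one_mul]
    ring
  calc ∑ s', p a s s' * psi γ ν π πold Vt At ωt dt s a (r s a) s'
      = ∑ s', (p a s s' * ψ₁ + K₁ * (p a s s' * td s') + K₂ * (p a s s' * B s')) :=
        Finset.sum_congr rfl fun s' _ => by rw [hpsi]; ring
    _ = (∑ s', p a s s') * ψ₁ + K₁ * ∑ s', p a s s' * td s' + K₂ * ∑ s', p a s s' * B s' := by
        rw [Finset.sum_add_distrib, Finset.sum_add_distrib, ← Finset.sum_mul, ← Finset.mul_sum,
          ← Finset.mul_sum]
    _ = ψ₁ := by rw [hp, htd, hB]; ring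

end EstimatingFunction

theorem estimating_function_unbiased_B1_general {S A : Type} [Fintype S] [Fintype A] [DecidableEq S]
    (p : A → S → S → ℝ) (r : S → A → ℝ) (γ : ℝ) (ν : S → ℝ) (pinf : A → S → ℝ)
    (hp : IsKernel p)
    (hγ0 : 0 ≤ γ) (hγ1 : γ < 1)
    (hpinf : IsPMF (fun as : A × S => pinf as.1 as.2))
    (π πold : S → A → ℝ) (hold : IsPolicy πold)
    (ωt : A → S → A → S → ℝ) :
    Epsi p r γ ν pinf π πold (Vfun p r γ πold) (Adv p r γ πold) ωt (dvisit p γ πold) =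
      eta1 p r γ ν π πold := by
  have hψ := sum_kernel_mul_psi (r := r) (ν := ν) (π := π) ωt (fun a s => (hp a s).2)
    (sum_kernel_mul_td_error_eq_zero hp hold hγ0 hγ1) (dvisit_flow hp hold hγ0 hγ1)
  have hpinf_sum : ∑ a, ∑ s, pinf a s = 1 := by simpa [Fintype.sum_prod_type] using hpinf.2
  rw [Epsi]
  simp only [hψ, ← Finset.sum_mul, hpinf_sum, one_mul]
  rw [eta1, Finset.sum_comm]
  refine Finset.sum_congr rfl fun s _ => ?_
  rw [← Finset.sum_mul, mul_comm, dnu, Finset.sum_comm]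

theorem estimating_function_unbiased_B1 {S A : Type} [Fintype S] [Fintype A] [DecidableEq S] [DecidableEq A]
    [Nonempty S] [Nonempty A]
    (p : A → S → S → ℝ) (r : S → A → ℝ) (γ : ℝ) (ν : S → ℝ) (pinf : A → S → ℝ) (Rmax : ℝ)
    (hp : IsKernel p) (hr : ∀ s a, |r s a| ≤ Rmax)
    (hγ0 : 0 ≤ γ) (hγ1 : γ < 1) (hν : IsPMF ν)
    (hpinf : IsPMF (fun as : A × S => pinf as.1 as.2)) (hpos : ∀ a s, 0 < pinf a s)
    (π πold : S → A → ℝ) (hπ : IsPolicy π) (hold : IsPolicy πold)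
    (ωt : A → S → A → S → ℝ) :
    Epsi p r γ ν pinf π πold (Vfun p r γ πold) (Adv p r γ πold) ωt (dvisit p γ πold) =
      eta1 p r γ ν π πold :=
  estimating_function_unbiased_B1_general p r γ ν pinf hp hγ0 hγ1 hpinf π πold hold ωt

end VEPO
end
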